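/- arXiv:math/0410131 — 2 statements merged into one kernel-verified Lean document; each statement's English description precedes it below -/
import Mathlib

section
/- There exist constants 0 < γ₂ ≤ γ₁ < ∞, depending only on n, such that for all α ≥ 1 and 0 ≤ β ≤ 1, the outer-boundary derivative u'(1+α+β; α, β) of the harmonic barrier satisfies -γ₁ ≤ u'(1+α+β; α, β) ≤ -γ₂ < 0. -/
/-!
Write `k = n - 2 ≥ 1` and `r = 1 + α + β`. Clearing the negative powers turns `-u'` into
`k α^k / (r (r^k - α^k))`. The tangent-line (Bernoulli) inequality for `t ↦ t^k`, taken at `α` and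
at `r`, squeezes `r^k - α^k` between `k (r - α) α^(k-1)` and `k (r - α) r^(k-1)`. Since
`1 ≤ r - α ≤ 2` and `α < r ≤ 3 α`, this gives `1 / (2 · 3^k) ≤ -u' ≤ 1`.
-/

open Real

/-- `-u'(r; α, β)` for `n = k + 2`, written with natural powers. -/
noncomputable def outerSlope (k : ℕ) (a r : ℝ) : ℝ := k * a ^ k / (r * (r ^ k - a ^ k))

lemma neg_mul_rpow_div_rpow_sub_rpow_eq_neg_outerSlope (k : ℕ) {a r : ℝ} (ha : 0 < a)
    (hr : 0 < r) :
    -(k : ℝ) * r ^ (-(k : ℝ) - 1) / (a ^ (-(k : ℝ)) - r ^ (-(k : ℝ))) = -outerSlope k a r := by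
  rw [rpow_sub hr, rpow_one, rpow_neg ha.le, rpow_neg hr.le, rpow_natCast, rpow_natCast,
    outerSlope]
  have hak : a ^ k ≠ 0 := by positivity
  have hrk : r ^ k ≠ 0 := by positivity
  rcases eq_or_ne (r ^ k - a ^ k) 0 with h | h
  · simp [sub_eq_zero.mp h]
  · have h' : (a ^ k)⁻¹ - (r ^ k)⁻¹ ≠ 0 := by
      rwa [inv_sub_inv hak hrk, div_ne_zero_iff, and_iff_left (mul_ne_zero hak hrk)]
    field_simp

/-- The tangent-line inequality for `t ↦ t ^ k` at `x`, multiplied through by `x`. -/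
lemma natCast_mul_sub_mul_pow_le_mul_pow_sub_pow (k : ℕ) {x y : ℝ} (hx : 0 < x)
    (hy : -x ≤ y) : k * (y - x) * x ^ k ≤ x * (y ^ k - x ^ k) := by
  obtain ⟨t, rfl⟩ : ∃ t, y = t * x := ⟨y / x, (div_mul_cancel₀ y hx.ne').symm⟩
  have ht : -1 ≤ t := by nlinarith
  have hbern := one_add_mul_sub_le_pow ht k
  calc k * (t * x - x) * x ^ k = x ^ (k + 1) * (k * (t - 1)) := by ring
    _ ≤ x ^ (k + 1) * (t ^ k - 1) := by gcongr; linarith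
    _ = x * ((t * x) ^ k - x ^ k) := by ring

lemma outerSlope_le_one (k : ℕ) {a r : ℝ} (ha : 0 < a) (hra : a + 1 ≤ r) :
    outerSlope k a r ≤ 1 := by
  have htangent := natCast_mul_sub_mul_pow_le_mul_pow_sub_pow k ha (by linarith : -a ≤ r)
  have hgap : 0 ≤ r ^ k - a ^ k := sub_nonneg.mpr (pow_le_pow_left₀ ha.le (by linarith) k)
  refine div_le_one_of_le₀ ?_ (mul_nonneg (by linarith) hgap)
  have : 0 ≤ (k : ℝ) * a ^ k := by positivity
  nlinarith

lemma le_outerSlope {k : ℕ} (hk : k ≠ 0) {a r c d : ℝ} (ha : 0 < a) (har : a < r)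
    (hrd : r ≤ a + d) (hrc : r ≤ c * a) :
    1 / (d * c ^ k) ≤ outerSlope k a r := by
  have hr : 0 < r := ha.trans har
  have hgap : 0 < r ^ k - a ^ k := sub_pos.mpr (pow_lt_pow_left₀ har ha.le hk)
  have htangent := natCast_mul_sub_mul_pow_le_mul_pow_sub_pow k hr (by linarith : -r ≤ a)
  have hrk : r ^ k ≤ c ^ k * a ^ k := by
    rw [← mul_pow]; exact pow_le_pow_left₀ hr.le hrc k
  have hk' : (0 : ℝ) < k := by positivity
  have hd : 0 < d := by linarith
  have hc : 0 < c := by nlinarith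
  rw [outerSlope, div_le_div_iff₀ (by positivity) (by positivity), one_mul]
  calc r * (r ^ k - a ^ k) ≤ k * (r - a) * r ^ k := by linarith
    _ ≤ k * d * (c ^ k * a ^ k) := by gcongr; linarith
    _ = k * a ^ k * (d * c ^ k) := by ring

theorem stmt_9 (n : ℕ) (hn : 2 < n) :
    ∃ γ₁ γ₂ : ℝ, 0 < γ₂ ∧ γ₂ ≤ γ₁ ∧
      ∀ α β : ℝ, 1 ≤ α → 0 ≤ β → β ≤ 1 →
        -γ₁ ≤ ((2 : ℝ) - n) * (1 + α + β) ^ ((1 : ℝ) - n) /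
            (α ^ ((2 : ℝ) - n) - (1 + α + β) ^ ((2 : ℝ) - n)) ∧
        ((2 : ℝ) - n) * (1 + α + β) ^ ((1 : ℝ) - n) /
            (α ^ ((2 : ℝ) - n) - (1 + α + β) ^ ((2 : ℝ) - n)) ≤ -γ₂ := by
  obtain ⟨k, rfl⟩ : ∃ k, n = k + 2 := ⟨n - 2, by omega⟩
  have hk : k ≠ 0 := by omega
  have hγ : 1 / (2 * 3 ^ k : ℝ) ≤ 1 :=
    div_le_one_of_le₀ (by nlinarith [one_le_pow₀ (by norm_num : (1 : ℝ) ≤ 3) (n := k)])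
      (by positivity)
  refine ⟨1, 1 / (2 * 3 ^ k), by positivity, hγ, fun α β hα hβ₀ hβ₁ => ?_⟩
  have h₂ : (2 : ℝ) - ↑(k + 2) = -k := by push_cast; ring
  have h₁ : (1 : ℝ) - ↑(k + 2) = -k - 1 := by push_cast; ring
  rw [h₁, h₂, neg_mul_rpow_div_rpow_sub_rpow_eq_neg_outerSlope k (by linarith) (by linarith),
    neg_le_neg_iff, neg_le_neg_iff]
  exact ⟨outerSlope_le_one k (by linarith) (by linarith),
    le_outerSlope hk (by linarith) (by linarith) (by linarith) (by linarith)⟩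
end

section
/- For any k > 0, ℓ > 0, m > 0 and n ≥ 1, the radial function v(r,t) = k(2 - r + ℓt)/(m(1 + ℓt)) + 1 defined for 1 < r ≤ 2 + ℓt satisfies m·Δ(v - 1)₊ = k(1-n)/(r(1+ℓt)) ≤ 0 ≤ k ℓ (r-1)/(m(1+ℓt)²) = ∂v/∂t on the region {1 < r < 2 + ℓt, t > 0}; in particular v is a supersolution of u_t = mΔ(u-1)₊ there. -/
/-!
For fixed `t`, `(v - 1)₊` is the positive part of `s ↦ c (R - s)` with `c = k / (m (1 + ℓ t)) > 0`
and `R = 2 + ℓ t`. Below `R` it is affine, so its radial Laplacian is the first-order term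
`(n - 1)/r · (-c) ≤ 0`. In `t`, `v` is a Möbius function with derivative
`k ℓ (r - 1) / (m (1 + ℓ t)²)`, nonnegative for `r > 1`.
-/

open Set Filter

noncomputable def radialLaplacian (n : ℕ) (w : ℝ → ℝ) (r : ℝ) : ℝ :=
  deriv (deriv w) r + ((n - 1 : ℝ) / r) * deriv w r

section PosPartAffine

variable {c R : ℝ}

lemma eqOn_max_affine_zero (hc : 0 ≤ c) :
    EqOn (fun s => max (c * (R - s)) 0) (fun s => c * (R - s)) (Iio R) := fun _ hs =>
  max_eq_left (mul_nonneg hc (sub_nonneg.mpr hs.le))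

lemma deriv_max_affine_zero_of_lt (hc : 0 ≤ c) {s : ℝ} (hs : s < R) :
    deriv (fun x => max (c * (R - x)) 0) s = -c := by
  rw [(eventuallyEq_of_mem (isOpen_Iio.mem_nhds hs) (eqOn_max_affine_zero hc)).deriv_eq]
  simp

lemma deriv_deriv_max_affine_zero_of_lt (hc : 0 ≤ c) {r : ℝ} (hr : r < R) :
    deriv (deriv fun s => max (c * (R - s)) 0) r = 0 := by
  have hconst : deriv (fun s => max (c * (R - s)) 0) =ᶠ[nhds r] fun _ => -c :=
    eventuallyEq_of_mem (isOpen_Iio.mem_nhds hr) fun _ hs => deriv_max_affine_zero_of_lt hc hs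
  rw [hconst.deriv_eq, deriv_const]

lemma radialLaplacian_max_affine_zero (n : ℕ) (hc : 0 ≤ c) {r : ℝ} (hr : r < R) :
    radialLaplacian n (fun s => max (c * (R - s)) 0) r = -((n - 1) * c / r) := by
  rw [radialLaplacian, deriv_deriv_max_affine_zero_of_lt hc hr, deriv_max_affine_zero_of_lt hc hr]
  ring

end PosPartAffine

lemma hasDerivAt_affine_div_affine {a b c d t : ℝ} (ht : c + d * t ≠ 0) :
    HasDerivAt (fun s => (a + b * s) / (c + d * s)) ((b * c - a * d) / (c + d * t) ^ 2) t := by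
  have hnum : HasDerivAt (fun s => a + b * s) b t := by
    simpa using ((hasDerivAt_id t).const_mul b).const_add a
  have hden : HasDerivAt (fun s => c + d * s) d t := by
    simpa using ((hasDerivAt_id t).const_mul d).const_add c
  exact (hnum.div hden ht).congr_deriv (by ring)

theorem stmt_10 (n : ℕ) (hn : 1 ≤ n) (k ℓ m : ℝ) (hk : 0 < k) (hl : 0 < ℓ) (hm : 0 < m)
    (v : ℝ → ℝ → ℝ)
    (hv : ∀ r t : ℝ, v r t = k * (2 - r + ℓ * t) / (m * (1 + ℓ * t)) + 1) :
    ∀ r t : ℝ, 1 < r → r < 2 + ℓ * t → 0 < t →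
      (m * (deriv (deriv (fun s : ℝ => max (v s t - 1) 0)) r +
          ((n - 1 : ℝ) / r) * deriv (fun s : ℝ => max (v s t - 1) 0) r)
        = k * (1 - n) / (r * (1 + ℓ * t))) ∧
      k * (1 - n) / (r * (1 + ℓ * t)) ≤ 0 ∧
      (0 : ℝ) ≤ k * ℓ * (r - 1) / (m * (1 + ℓ * t) ^ 2) ∧
      deriv (fun s : ℝ => v r s) t = k * ℓ * (r - 1) / (m * (1 + ℓ * t) ^ 2) := by
  intro r t hr1 hr2 ht
  have hlt : 0 < 1 + ℓ * t := by positivity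
  have hn' : (1 : ℝ) ≤ n := by exact_mod_cast hn
  have hradial : (fun s => max (v s t - 1) 0) =
      fun s => max (k / (m * (1 + ℓ * t)) * (2 + ℓ * t - s)) 0 := by
    funext s
    rw [hv, add_sub_cancel_right]
    congr 1
    ring
  have htime : (fun s => v r s) = fun s => (k * (2 - r) + k * ℓ * s) / (m + m * ℓ * s) + 1 := by
    funext s
    rw [hv]
    ring
  refine ⟨?_, ?_, ?_, ?_⟩
  · change m * radialLaplacian n _ r = _
    rw [hradial, radialLaplacian_max_affine_zero n (by positivity) hr2]
    field_simp
    ring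
  · exact div_nonpos_of_nonpos_of_nonneg (by nlinarith) (by positivity)
  · exact div_nonneg (mul_nonneg (by positivity) (by linarith)) (by positivity)
  · rw [htime, ((hasDerivAt_affine_div_affine (by positivity)).add_const 1).deriv]
    field_simp
    ring
end
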